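/- arXiv:1804.02945 — 6 statements merged into one kernel-verified Lean document; each statement's English description precedes it below -/
import Mathlib

section
/- Let f = h + conj(g) be a harmonic mapping on the unit disk 𝔻 and suppose M := ‖f‖_n = sup_{z ∈ 𝔻} (1−|z|²)·(|h′(z)|+|g′(z)|)/(1+|f(z)|²) is finite. Then for all z, w ∈ 𝔻 one has χ(f(z), f(w)) ≤ M·ρ(z,w), where χ is the chordal distance and ρ is the hyperbolic distance; in particular f is normal. -/
/-!
Inverse stereographic projection `σ` maps `ℂ` onto the unit sphere of `ℂ × ℝ` with
`χ(a, b) = ‖σ a - σ b‖ / 2`, and along any curve `A` one has `‖(σ ∘ A)'‖ = 2 ‖A'‖ / (1 + ‖A‖²)`.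
Join `z` to `w` by the hyperbolic geodesic `γ t = φ_z (t ζ₀)`, where `φ_z ζ = (ζ + z) / (1 + z̄ ζ)`
and `ζ₀ = φ_z⁻¹ w`, so that `r = ‖ζ₀‖` is the pseudo-hyperbolic distance. As `φ_z` is a hyperbolic
isometry, the hyperbolic speed `‖γ'‖ / (1 - ‖γ‖²)` is `r / (1 - t² r²)`, whose integral over
`[0, 1]` is `artanh r = ρ(z, w)`. Since `‖(f ∘ γ)'‖ / (1 + ‖f ∘ γ‖²) ≤ ‖f‖ₙ ‖γ'‖ / (1 - ‖γ‖²)`,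
the mean value inequality applied to `σ ∘ f ∘ γ` gives `χ(f z, f w) ≤ ‖f‖ₙ ρ(z, w)`.
-/

open Complex Metric Set ENNReal Filter

noncomputable section

/-- The open unit disk in the complex plane. -/
def unitDisk : Set ℂ := Metric.ball (0 : ℂ) 1

notation "𝔻" => unitDisk

/-- The chordal distance on ℂ. -/
def chordal (z w : ℂ) : ℝ :=
  ‖z - w‖ /
    (Real.sqrt (1 + ‖z‖ ^ 2) * Real.sqrt (1 + ‖w‖ ^ 2))

/-- The hyperbolic distance on the unit disk. -/
def hypDist (z w : ℂ) : ℝ :=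
  (1 / 2) * Real.log
    ((1 + ‖(z - w) / (1 - (starRingEnd ℂ) z * w)‖) /
     (1 - ‖(z - w) / (1 - (starRingEnd ℂ) z * w)‖))

/-- The harmonic mapping `f = h + conj g`. -/
def harmMap (h g : ℂ → ℂ) : ℂ → ℂ := fun z => h z + (starRingEnd ℂ) (g z)

/-- The quantity `(1 - |z|²) (|h'(z)| + |g'(z)|) / (1 + |f(z)|²)` for `f = h + conj g`. -/
def nQuot (h g : ℂ → ℂ) (z : ℂ) : ℝ :=
  (1 - ‖z‖ ^ 2) * (‖deriv h z‖ + ‖deriv g z‖) /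
    (1 + ‖harmMap h g z‖ ^ 2)

/-- `‖f‖ₙ`, the normality norm of the harmonic mapping `f = h + conj g`,
as an element of `[0, ∞]`. -/
def harmNorm (h g : ℂ → ℂ) : ℝ≥0∞ :=
  ⨆ z ∈ 𝔻, ENNReal.ofReal (nQuot h g z)

/-- `φ` is a conformal automorphism of the unit disk. -/
def IsDiskAut (φ : ℂ → ℂ) : Prop :=
  DifferentiableOn ℂ φ 𝔻 ∧ Set.MapsTo φ 𝔻 𝔻 ∧
    ∃ ψ : ℂ → ℂ, DifferentiableOn ℂ ψ 𝔻 ∧ Set.MapsTo ψ 𝔻 𝔻 ∧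
      (∀ z ∈ 𝔻, ψ (φ z) = z) ∧ (∀ z ∈ 𝔻, φ (ψ z) = z)

open ComplexConjugate Topology RealInnerProductSpace

section InvStereographic

variable {E : Type*} [NormedAddCommGroup E] [InnerProductSpace ℝ E]

def invStereographic (a : E) : WithLp 2 (E × ℝ) :=
  WithLp.toLp 2 ((2 / (1 + ‖a‖ ^ 2)) • a, (‖a‖ ^ 2 - 1) / (1 + ‖a‖ ^ 2))

def invStereographicDeriv (a v : E) : WithLp 2 (E × ℝ) :=
  WithLp.toLp 2 ((2 / (1 + ‖a‖ ^ 2)) • v - (4 * ⟪a, v⟫ / (1 + ‖a‖ ^ 2) ^ 2) • a,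
    4 * ⟪a, v⟫ / (1 + ‖a‖ ^ 2) ^ 2)

theorem norm_invStereographic_sub_sq (a b : E) :
    ‖invStereographic a - invStereographic b‖ ^ 2
      = 4 * ‖a - b‖ ^ 2 / ((1 + ‖a‖ ^ 2) * (1 + ‖b‖ ^ 2)) := by
  rw [invStereographic, invStereographic, ← WithLp.toLp_sub, WithLp.prod_norm_sq_eq_of_L2]
  simp only [WithLp.toLp_fst, WithLp.toLp_snd, Prod.fst_sub, Prod.snd_sub, norm_sub_sq_real,
    norm_smul, real_inner_smul_left, real_inner_smul_right, Real.norm_eq_abs, sq_abs, mul_pow]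
  have : 0 < 1 + ‖a‖ ^ 2 := by positivity
  have : 0 < 1 + ‖b‖ ^ 2 := by positivity
  field_simp
  ring

theorem norm_invStereographicDeriv (a v : E) :
    ‖invStereographicDeriv a v‖ = 2 * ‖v‖ / (1 + ‖a‖ ^ 2) := by
  have : 0 < 1 + ‖a‖ ^ 2 := by positivity
  refine (sq_eq_sq₀ (norm_nonneg _) (by positivity)).1 ?_
  rw [invStereographicDeriv, WithLp.prod_norm_sq_eq_of_L2]
  simp only [WithLp.toLp_fst, WithLp.toLp_snd, norm_sub_sq_real, norm_smul, real_inner_smul_left,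
    real_inner_smul_right, Real.norm_eq_abs, sq_abs, mul_pow, real_inner_comm v a]
  field_simp
  ring

theorem HasDerivAt.invStereographic {A : ℝ → E} {A' : E} {t : ℝ} (hA : HasDerivAt A A' t) :
    HasDerivAt (fun s => invStereographic (A s)) (invStereographicDeriv (A t) A') t := by
  have hs : 1 + ‖A t‖ ^ 2 ≠ 0 := by positivity
  have hn := hA.norm_sq.const_add 1
  have h1 := ((hasDerivAt_const t (2 : ℝ)).div hn hs).smul hA
  have h2 := (hA.norm_sq.sub_const 1).div hn hs
  have h : HasDerivAt (fun s => _root_.invStereographic (A s)) (WithLp.toLp 2 _) t :=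
    (WithLp.prodContinuousLinearEquiv 2 ℝ E ℝ).symm.hasFDerivAt.comp_hasDerivAt t (h1.prodMk h2)
  convert h using 1
  rw [invStereographicDeriv]
  congr 1
  ext
  · simp only [Pi.div_apply]
    match_scalars
    · field_simp
    · field_simp
      ring
  · field_simp
    ring

end InvStereographic

theorem norm_invStereographic_sub (a b : ℂ) :
    ‖invStereographic a - invStereographic b‖ = 2 * chordal a b := by
  refine (sq_eq_sq₀ (norm_nonneg _) (by unfold chordal; positivity)).1 ?_
  rw [norm_invStereographic_sub_sq, chordal, mul_pow, div_pow, mul_pow,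
    Real.sq_sqrt (by positivity), Real.sq_sqrt (by positivity)]
  ring

theorem chordal_le_of_hasDerivAt {A A' : ℝ → ℂ} {B B' : ℝ → ℝ} {a b : ℝ} (hab : a ≤ b)
    (hA : ∀ t ∈ Icc a b, HasDerivAt A (A' t) t) (hB : ∀ t ∈ Icc a b, HasDerivAt B (B' t) t)
    (hbound : ∀ t ∈ Ico a b, ‖A' t‖ / (1 + ‖A t‖ ^ 2) ≤ B' t) :
    chordal (A a) (A b) ≤ B b - B a := by
  have key := image_norm_le_of_norm_deriv_right_le_deriv_boundary'
    (f := fun t => invStereographic (A t) - invStereographic (A a))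
    (B := fun t => 2 * (B t - B a)) (B' := fun t => 2 * B' t)
    (fun t ht => ((hA t ht).invStereographic.sub_const _).continuousAt.continuousWithinAt)
    (fun t ht => ((hA t (Ico_subset_Icc_self ht)).invStereographic.sub_const _).hasDerivWithinAt)
    (by simp)
    (fun t ht => (((hB t ht).sub_const (B a)).const_mul 2).continuousAt.continuousWithinAt)
    (fun t ht => (((hB t (Ico_subset_Icc_self ht)).sub_const (B a)).const_mul 2).hasDerivWithinAt)
    (fun t ht => by
      rw [norm_invStereographicDeriv, mul_div_assoc]
      exact mul_le_mul_of_nonneg_left (hbound t ht) zero_le_two)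
    (right_mem_Icc.2 hab)
  rw [norm_sub_rev, norm_invStereographic_sub] at key
  linarith

theorem Real.hasDerivAt_artanh {x : ℝ} (hx : x ∈ Ioo (-1) 1) :
    HasDerivAt Real.artanh (1 - x ^ 2)⁻¹ x := by
  have h1 : 0 < 1 + x := by linarith [hx.1]
  have h2 : 0 < 1 - x := by linarith [hx.2]
  have hlog : HasDerivAt (fun y => 1 / 2 * (Real.log (1 + y) - Real.log (1 - y)))
      (1 / 2 * (1 / (1 + x) - (-1) / (1 - x))) x :=
    ((((hasDerivAt_id x).const_add 1).log h1.ne').sub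
      (((hasDerivAt_id x).const_sub 1).log h2.ne')).const_mul _
  have heq : Real.artanh =ᶠ[𝓝 x] fun y => 1 / 2 * (Real.log (1 + y) - Real.log (1 - y)) := by
    filter_upwards [isOpen_Ioo.mem_nhds hx] with y hy
    rw [Real.artanh_eq_half_log (Ioo_subset_Icc_self hy),
      Real.log_div (by linarith [hy.1]) (by linarith [hy.2])]
  refine (hlog.congr_of_eventuallyEq heq).congr_deriv ?_
  have : 1 - x ^ 2 ≠ 0 := by nlinarith
  field_simp
  ring

theorem mem_unitDisk {z : ℂ} : z ∈ 𝔻 ↔ ‖z‖ < 1 := mem_ball_zero_iff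

def mobius (z ζ : ℂ) : ℂ := (ζ + z) / (1 + conj z * ζ)

theorem mobius_zero (z : ℂ) : mobius z 0 = z := by simp [mobius]

theorem one_add_conj_mul_ne_zero {z ζ : ℂ} (h : ‖z‖ * ‖ζ‖ < 1) : 1 + conj z * ζ ≠ 0 := by
  intro h0
  have : ‖conj z * ζ‖ = 1 := by rw [eq_neg_of_add_eq_zero_right h0, norm_neg, norm_one]
  rw [norm_mul, norm_conj] at this
  linarith

theorem one_sub_norm_mobius_sq {z ζ : ℂ} (h : 1 + conj z * ζ ≠ 0) :
    1 - ‖mobius z ζ‖ ^ 2 = (1 - ‖z‖ ^ 2) * (1 - ‖ζ‖ ^ 2) / ‖1 + conj z * ζ‖ ^ 2 := by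
  have hpos : 0 < ‖1 + conj z * ζ‖ ^ 2 := by positivity
  rw [mobius, norm_div, div_pow, eq_div_iff hpos.ne', sub_mul, div_mul_cancel₀ _ hpos.ne']
  simp only [Complex.sq_norm, normSq_apply, add_re, add_im, mul_re, mul_im, one_re, one_im,
    conj_re, conj_im]
  ring

theorem norm_mobius_lt_one {z ζ : ℂ} (hz : ‖z‖ < 1) (hζ : ‖ζ‖ < 1) : ‖mobius z ζ‖ < 1 := by
  have h := one_add_conj_mul_ne_zero (z := z) (ζ := ζ)
    (by nlinarith [norm_nonneg z, norm_nonneg ζ])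
  have : 0 < 1 - ‖z‖ ^ 2 := by nlinarith [norm_nonneg z]
  have : 0 < 1 - ‖ζ‖ ^ 2 := by nlinarith [norm_nonneg ζ]
  have : 0 < 1 - ‖mobius z ζ‖ ^ 2 := by
    rw [one_sub_norm_mobius_sq h]
    positivity
  nlinarith [norm_nonneg (mobius z ζ)]

theorem mobius_sub_div {z w : ℂ} (hz : ‖z‖ < 1) (h : 1 - conj z * w ≠ 0) :
    mobius z ((w - z) / (1 - conj z * w)) = w := by
  have hz' : 1 - conj z * z ≠ 0 := by
    rw [conj_mul']
    norm_cast
    nlinarith [norm_nonneg z]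
  have e : 1 + conj z * ((w - z) / (1 - conj z * w)) = (1 - conj z * z) / (1 - conj z * w) := by
    field_simp
    ring
  rw [mobius, e, div_add' _ _ _ h, div_div_div_cancel_right₀ h, div_eq_iff hz']
  ring

theorem hasDerivAt_mobius {z ζ : ℂ} (h : 1 + conj z * ζ ≠ 0) :
    HasDerivAt (mobius z) ((1 - conj z * z) / (1 + conj z * ζ) ^ 2) ζ := by
  refine (((hasDerivAt_id ζ).add_const z).div
    (((hasDerivAt_id ζ).const_mul (conj z)).const_add 1) h).congr_deriv ?_
  simp only [id]
  field_simp
  ring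

theorem hasDerivAt_mobius_ofReal_mul {z ζ₀ : ℂ} {t : ℝ} (hz : ‖z‖ < 1) (ht : ‖(t : ℂ) * ζ₀‖ < 1) :
    HasDerivAt (fun s : ℝ => mobius z (s * ζ₀))
      ((1 - conj z * z) / (1 + conj z * (t * ζ₀)) ^ 2 * ζ₀) t := by
  have hne :=
    one_add_conj_mul_ne_zero (mul_lt_one_of_nonneg_of_lt_one_left (norm_nonneg z) hz ht.le)
  exact ((hasDerivAt_mobius hne).comp (t : ℂ) (hasDerivAt_mul_const ζ₀)).comp_ofReal

theorem norm_mul_deriv_mobius_div {z ζ : ℂ} (hz : ‖z‖ < 1) (hζ : ‖ζ‖ < 1) (v : ℂ) :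
    ‖(1 - conj z * z) / (1 + conj z * ζ) ^ 2 * v‖ / (1 - ‖mobius z ζ‖ ^ 2)
      = ‖v‖ / (1 - ‖ζ‖ ^ 2) := by
  have h := one_add_conj_mul_ne_zero (z := z) (ζ := ζ)
    (by nlinarith [norm_nonneg z, norm_nonneg ζ])
  have hz2 : 0 < 1 - ‖z‖ ^ 2 := by nlinarith [norm_nonneg z]
  have hζ2 : 0 < 1 - ‖ζ‖ ^ 2 := by nlinarith [norm_nonneg ζ]
  have hconj : 1 - conj z * z = ((1 - ‖z‖ ^ 2 : ℝ) : ℂ) := by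
    rw [conj_mul']
    push_cast
    ring
  have : 0 < ‖1 + conj z * ζ‖ := norm_pos_iff.2 h
  rw [one_sub_norm_mobius_sq h, hconj, norm_mul, norm_div, norm_pow, norm_real, Real.norm_eq_abs,
    abs_of_pos hz2]
  field_simp

theorem norm_sub_div_one_sub_conj_mul_lt_one {z w : ℂ} (hz : ‖z‖ < 1) (hw : ‖w‖ < 1) :
    ‖(z - w) / (1 - conj z * w)‖ < 1 := by
  have := norm_mobius_lt_one hz (ζ := -w) (by rwa [norm_neg])
  rwa [mobius, neg_add_eq_sub, mul_neg, ← sub_eq_add_neg] at this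

theorem hypDist_eq_artanh {z w : ℂ} (hz : z ∈ 𝔻) (hw : w ∈ 𝔻) :
    hypDist z w = Real.artanh ‖(z - w) / (1 - conj z * w)‖ := by
  have := norm_sub_div_one_sub_conj_mul_lt_one (mem_unitDisk.1 hz) (mem_unitDisk.1 hw)
  rw [hypDist, Real.artanh_eq_half_log ⟨by linarith [norm_nonneg ((z - w) / (1 - conj z * w))],
    this.le⟩]

theorem hypDist_nonneg {z w : ℂ} (hz : z ∈ 𝔻) (hw : w ∈ 𝔻) : 0 ≤ hypDist z w := by
  rw [hypDist_eq_artanh hz hw]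
  exact Real.artanh_nonneg (norm_nonneg _)

theorem nQuot_nonneg (h g : ℂ → ℂ) {z : ℂ} (hz : z ∈ 𝔻) : 0 ≤ nQuot h g z := by
  have : 0 ≤ 1 - ‖z‖ ^ 2 := by nlinarith [norm_nonneg z, mem_unitDisk.1 hz]
  unfold nQuot
  positivity

theorem nQuot_le_toReal_harmNorm {h g : ℂ → ℂ} (hfin : harmNorm h g ≠ ⊤) {z : ℂ} (hz : z ∈ 𝔻) :
    nQuot h g z ≤ (harmNorm h g).toReal := by
  rw [← ENNReal.toReal_ofReal (nQuot_nonneg h g hz)]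
  exact ENNReal.toReal_mono hfin
    (le_iSup₂ (f := fun z (_ : z ∈ 𝔻) => ENNReal.ofReal (nQuot h g z)) z hz)

theorem hasDerivAt_harmMap_comp {h g : ℂ → ℂ} {γ : ℝ → ℂ} {γ' : ℂ} {t : ℝ}
    (hγ : HasDerivAt γ γ' t) (hh : DifferentiableAt ℂ h (γ t))
    (hg : DifferentiableAt ℂ g (γ t)) :
    HasDerivAt (fun s => harmMap h g (γ s))
      (deriv h (γ t) * γ' + conj (deriv g (γ t) * γ')) t :=
  (hh.hasDerivAt.comp t hγ).add (hg.hasDerivAt.comp t hγ).star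

theorem norm_harmMap_deriv_div_le (h g : ℂ → ℂ) {z : ℂ} (hz : z ∈ 𝔻) (v : ℂ) :
    ‖deriv h z * v + conj (deriv g z * v)‖ / (1 + ‖harmMap h g z‖ ^ 2)
      ≤ nQuot h g z * (‖v‖ / (1 - ‖z‖ ^ 2)) := by
  have : 0 < 1 - ‖z‖ ^ 2 := by nlinarith [norm_nonneg z, mem_unitDisk.1 hz]
  have hnum : ‖deriv h z * v + conj (deriv g z * v)‖ ≤ (‖deriv h z‖ + ‖deriv g z‖) * ‖v‖ := by
    refine (norm_add_le _ _).trans_eq ?_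
    rw [norm_conj, norm_mul, norm_mul]
    ring
  calc ‖deriv h z * v + conj (deriv g z * v)‖ / (1 + ‖harmMap h g z‖ ^ 2)
      ≤ (‖deriv h z‖ + ‖deriv g z‖) * ‖v‖ / (1 + ‖harmMap h g z‖ ^ 2) := by gcongr
    _ = nQuot h g z * (‖v‖ / (1 - ‖z‖ ^ 2)) := by
      unfold nQuot
      field_simp

theorem chordal_harmMap_le_of_hasDerivAt {h g : ℂ → ℂ} (hh : DifferentiableOn ℂ h 𝔻)
    (hg : DifferentiableOn ℂ g 𝔻) {M : ℝ} (hM : ∀ z ∈ 𝔻, nQuot h g z ≤ M)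
    {γ γ' : ℝ → ℂ} {L L' : ℝ → ℝ} {a b : ℝ} (hab : a ≤ b) (hγ𝔻 : ∀ t ∈ Icc a b, γ t ∈ 𝔻)
    (hγ : ∀ t ∈ Icc a b, HasDerivAt γ (γ' t) t) (hL : ∀ t ∈ Icc a b, HasDerivAt L (L' t) t)
    (hbound : ∀ t ∈ Ico a b, ‖γ' t‖ / (1 - ‖γ t‖ ^ 2) ≤ L' t) :
    chordal (harmMap h g (γ a)) (harmMap h g (γ b)) ≤ M * (L b - L a) := by
  have hopen : IsOpen 𝔻 := isOpen_ball
  have key := chordal_le_of_hasDerivAt hab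
    (fun t ht => hasDerivAt_harmMap_comp (hγ t ht)
      (hh.differentiableAt (hopen.mem_nhds (hγ𝔻 t ht)))
      (hg.differentiableAt (hopen.mem_nhds (hγ𝔻 t ht))))
    (fun t ht => (hL t ht).const_mul M)
    (fun t ht => by
      have ht' := hγ𝔻 t (Ico_subset_Icc_self ht)
      have : 0 < 1 - ‖γ t‖ ^ 2 := by nlinarith [norm_nonneg (γ t), mem_unitDisk.1 ht']
      refine (norm_harmMap_deriv_div_le h g ht' (γ' t)).trans ?_
      exact mul_le_mul (hM _ ht') (hbound t ht) (by positivity)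
        ((nQuot_nonneg h g ht').trans (hM _ ht')))
  rwa [mul_sub]

theorem chordal_harmMap_le_mul_hypDist {h g : ℂ → ℂ} (hh : DifferentiableOn ℂ h 𝔻)
    (hg : DifferentiableOn ℂ g 𝔻) {M : ℝ} (hM : ∀ z ∈ 𝔻, nQuot h g z ≤ M) {z w : ℂ}
    (hz : z ∈ 𝔻) (hw : w ∈ 𝔻) :
    chordal (harmMap h g z) (harmMap h g w) ≤ M * hypDist z w := by
  have hz1 := mem_unitDisk.1 hz
  have hw1 := mem_unitDisk.1 hw
  have hd : 1 - conj z * w ≠ 0 := by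
    simpa [← sub_eq_add_neg] using one_add_conj_mul_ne_zero (z := z) (ζ := -w)
      (by rw [norm_neg]; nlinarith [norm_nonneg z, norm_nonneg w])
  set ζ₀ := (w - z) / (1 - conj z * w)
  set r := ‖ζ₀‖
  have hr_eq : r = ‖(z - w) / (1 - conj z * w)‖ := by rw [norm_div, norm_sub_rev, ← norm_div]
  have hr1 : r < 1 := hr_eq ▸ norm_sub_div_one_sub_conj_mul_lt_one hz1 hw1
  have hseg : ∀ t ∈ Icc (0 : ℝ) 1, ‖(t : ℂ) * ζ₀‖ = t * r := fun t ht => by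
    rw [norm_mul, norm_real, Real.norm_eq_abs, abs_of_nonneg ht.1]
  have hseg1 : ∀ t ∈ Icc (0 : ℝ) 1, t * r < 1 := fun t ht =>
    (mul_le_of_le_one_left (norm_nonneg _) ht.2).trans_lt hr1
  have hdisk : ∀ t ∈ Icc (0 : ℝ) 1, ‖(t : ℂ) * ζ₀‖ < 1 := fun t ht => hseg t ht ▸ hseg1 t ht
  have hL : ∀ t ∈ Icc (0 : ℝ) 1, HasDerivAt (fun s => Real.artanh (s * r))
      ((1 - (t * r) ^ 2)⁻¹ * r) t := fun t ht => by
    have hmem : t * r ∈ Ioo (-1) 1 := ⟨by nlinarith [mul_nonneg ht.1 (norm_nonneg ζ₀)], hseg1 t ht⟩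
    exact (Real.hasDerivAt_artanh hmem).comp (h := fun s => s * r) t (hasDerivAt_mul_const r)
  have key := chordal_harmMap_le_of_hasDerivAt hh hg hM zero_le_one
    (fun t ht => mem_unitDisk.2 (norm_mobius_lt_one hz1 (hdisk t ht)))
    (fun t ht => hasDerivAt_mobius_ofReal_mul hz1 (hdisk t ht)) hL
    (fun t ht => by
      rw [norm_mul_deriv_mobius_div hz1 (hdisk t (Ico_subset_Icc_self ht)),
        hseg t (Ico_subset_Icc_self ht), div_eq_inv_mul])
  have h0 : mobius z ((0 : ℝ) * ζ₀) = z := by simp [mobius_zero]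
  have h1 : mobius z ((1 : ℝ) * ζ₀) = w := by simpa using mobius_sub_div hz1 hd
  rwa [h0, h1, zero_mul, one_mul, Real.artanh_zero, sub_zero, hr_eq, ← hypDist_eq_artanh hz hw]
    at key

theorem normal_of_harmNorm_lt_top (h g : ℂ → ℂ)
    (hh : DifferentiableOn ℂ h 𝔻) (hg : DifferentiableOn ℂ g 𝔻)
    (hfin : harmNorm h g ≠ ⊤) :
    (∀ z ∈ 𝔻, ∀ w ∈ 𝔻,
      chordal (harmMap h g z) (harmMap h g w) ≤ (harmNorm h g).toReal * hypDist z w) ∧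
    ∃ M : ℝ, ∀ z ∈ 𝔻, ∀ w ∈ 𝔻, z ≠ w →
      chordal (harmMap h g z) (harmMap h g w) / hypDist z w ≤ M := by
  have lipschitz : ∀ z ∈ 𝔻, ∀ w ∈ 𝔻,
      chordal (harmMap h g z) (harmMap h g w) ≤ (harmNorm h g).toReal * hypDist z w :=
    fun z hz w hw => chordal_harmMap_le_mul_hypDist hh hg
      (fun _ hζ => nQuot_le_toReal_harmNorm hfin hζ) hz hw
  exact ⟨lipschitz, _, fun z hz w hw _ =>
    div_le_of_le_mul₀ (hypDist_nonneg hz hw) ENNReal.toReal_nonneg (lipschitz z hz w hw)⟩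
end
end

section
/- Let f = h + conj(g) be a normal harmonic mapping on the unit disk 𝔻 and let A(w) = a·w + b·conj(w) with a, b ∈ ℂ and |a| ≠ |b|. Then A∘f, which is the harmonic mapping H + conj(G) with H = a·h + b·g and G = conj(b)·h + conj(a)·g, is normal, i.e. ‖A∘f‖_n < ∞. In particular, the class of all normal harmonic mappings on 𝔻 is an affine and linearly invariant family. -/
open Complex Metric Set ENNReal Filter

noncomputable section

/-! Since `|a w + b w̄| ≥ ||a| - |b|| |w|`, the denominator `1 + |A ∘ f|²` dominates a positive
multiple of `1 + |f|²`, while `|H'| + |G'| ≤ (|a| + |b|) (|h'| + |g'|)`. Hence the normality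
quotient of `A ∘ f` is pointwise bounded by a constant multiple of that of `f`. -/

open ComplexConjugate

theorem abs_norm_sub_norm_mul_le_norm_mul_add_mul_conj (a b w : ℂ) :
    |‖a‖ - ‖b‖| * ‖w‖ ≤ ‖a * w + b * conj w‖ :=
  calc |‖a‖ - ‖b‖| * ‖w‖ = |‖a * w‖ - ‖-(b * conj w)‖| := by
        rw [norm_neg, norm_mul, norm_mul, Complex.norm_conj, ← sub_mul, abs_mul, abs_norm]
    _ ≤ ‖a * w - -(b * conj w)‖ := abs_norm_sub_norm_le _ _
    _ = ‖a * w + b * conj w‖ := by rw [sub_neg_eq_add]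

theorem min_one_sq_mul_one_add_sq_le {c x y : ℝ} (hc : 0 ≤ c) (hx : 0 ≤ x) (h : c * x ≤ y) :
    min 1 (c ^ 2) * (1 + x ^ 2) ≤ 1 + y ^ 2 := by
  have hsq : (c * x) ^ 2 ≤ y ^ 2 := pow_le_pow_left₀ (by positivity) h 2
  have h1 : min 1 (c ^ 2) ≤ 1 := min_le_left _ _
  have h2 : min 1 (c ^ 2) ≤ c ^ 2 := min_le_right _ _
  nlinarith [sq_nonneg x]

theorem norm_add_norm_conj_affine_le (a b u v : ℂ) :
    ‖a * u + b * v‖ + ‖conj b * u + conj a * v‖ ≤ (‖a‖ + ‖b‖) * (‖u‖ + ‖v‖) :=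
  calc ‖a * u + b * v‖ + ‖conj b * u + conj a * v‖
      ≤ (‖a * u‖ + ‖b * v‖) + (‖conj b * u‖ + ‖conj a * v‖) :=
        add_le_add (norm_add_le _ _) (norm_add_le _ _)
    _ = (‖a‖ + ‖b‖) * (‖u‖ + ‖v‖) := by
        simp only [norm_mul, Complex.norm_conj]
        ring

theorem deriv_const_mul_add_const_mul {𝕜 : Type*} [NontriviallyNormedField 𝕜] {h g : 𝕜 → 𝕜}
    {z : 𝕜} (hh : DifferentiableAt 𝕜 h z) (hg : DifferentiableAt 𝕜 g z) (a b : 𝕜) :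
    deriv (fun z => a * h z + b * g z) z = a * deriv h z + b * deriv g z :=
  ((hh.hasDerivAt.const_mul a).add (hg.hasDerivAt.const_mul b)).deriv

theorem harmMap_affine (h g : ℂ → ℂ) (a b z : ℂ) :
    harmMap (fun z => a * h z + b * g z) (fun z => conj b * h z + conj a * g z) z =
      a * harmMap h g z + b * conj (harmMap h g z) := by
  simp only [harmMap, map_add, map_mul, Complex.conj_conj]
  ring

theorem nQuot_affine_le {h g : ℂ → ℂ} {z : ℂ} (hz : z ∈ 𝔻) (hh : DifferentiableAt ℂ h z)
    (hg : DifferentiableAt ℂ g z) {a b : ℂ} (hab : ‖a‖ ≠ ‖b‖) :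
    nQuot (fun z => a * h z + b * g z) (fun z => conj b * h z + conj a * g z) z ≤
      (‖a‖ + ‖b‖) / min 1 (|‖a‖ - ‖b‖| ^ 2) * nQuot h g z := by
  have hc : 0 < |‖a‖ - ‖b‖| := abs_pos.mpr (sub_ne_zero.mpr hab)
  have hm : 0 < min 1 (|‖a‖ - ‖b‖| ^ 2) := lt_min one_pos (by positivity)
  have hz1 : 0 ≤ 1 - ‖z‖ ^ 2 := by
    have : ‖z‖ < 1 := mem_ball_zero_iff.mp hz
    nlinarith [norm_nonneg z]
  have hden := min_one_sq_mul_one_add_sq_le hc.le (norm_nonneg _)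
    (abs_norm_sub_norm_mul_le_norm_mul_add_mul_conj a b (harmMap h g z))
  have hnum := norm_add_norm_conj_affine_le a b (deriv h z) (deriv g z)
  rw [nQuot, nQuot, harmMap_affine, deriv_const_mul_add_const_mul hh hg,
    deriv_const_mul_add_const_mul hh hg, div_mul_div_comm, mul_left_comm]
  exact div_le_div₀ (by positivity) (mul_le_mul_of_nonneg_left hnum hz1) (by positivity) hden

theorem harmNorm_le_ofReal_mul {h g h' g' : ℂ → ℂ} {K : ℝ} (hK : 0 ≤ K)
    (hle : ∀ z ∈ 𝔻, nQuot h' g' z ≤ K * nQuot h g z) :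
    harmNorm h' g' ≤ ENNReal.ofReal K * harmNorm h g :=
  iSup₂_le fun z hz =>
    calc ENNReal.ofReal (nQuot h' g' z) ≤ ENNReal.ofReal (K * nQuot h g z) :=
          ENNReal.ofReal_le_ofReal (hle z hz)
      _ = ENNReal.ofReal K * ENNReal.ofReal (nQuot h g z) := ENNReal.ofReal_mul hK
      _ ≤ ENNReal.ofReal K * harmNorm h g := by
          gcongr
          exact le_iSup₂ (f := fun z (_ : z ∈ 𝔻) => ENNReal.ofReal (nQuot h g z)) z hz

theorem affine_of_normal (h g : ℂ → ℂ)
    (hh : DifferentiableOn ℂ h 𝔻) (hg : DifferentiableOn ℂ g 𝔻)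
    (hf : harmNorm h g < ⊤) (a b : ℂ) (hab : ‖a‖ ≠ ‖b‖) :
    harmNorm (fun z => a * h z + b * g z)
      (fun z => (starRingEnd ℂ) b * h z + (starRingEnd ℂ) a * g z) < ⊤ :=
  calc harmNorm _ _
      ≤ ENNReal.ofReal ((‖a‖ + ‖b‖) / min 1 (|‖a‖ - ‖b‖| ^ 2)) * harmNorm h g :=
        harmNorm_le_ofReal_mul (by positivity) fun z hz =>
          nQuot_affine_le hz (hh.differentiableAt (isOpen_ball.mem_nhds hz))
            (hg.differentiableAt (isOpen_ball.mem_nhds hz)) hab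
    _ < ⊤ := ENNReal.mul_lt_top ENNReal.ofReal_lt_top hf
end
end

section
/- The harmonic mapping L(z) = Re(z/(1−z)) + i·Im(z/(1−z)²) on the unit disk 𝔻, whose canonical decomposition is L = h + conj(g) with h(z) = z(2−z)/(2(1−z)²) and g(z) = −z²/(2(1−z)²), is normal; that is, ‖L‖_n = sup_{z ∈ 𝔻} (1−|z|²)·(|h′(z)|+|g′(z)|)/(1+|L(z)|²) < ∞. -/
open Complex Metric Set ENNReal Filter

noncomputable section

/-!
In the variable `w = 1 / (1 - z)` the disk becomes the half-plane `re w > 1 / 2`, and with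
`w = a + b i` one has `h' = w³`, `g' = -z w³`, `(1 - |z|²) |w|² = 2a - 1` and
`L = (a - 1) + i (2a - 1) b`. The normality quotient is then at most
`2 (2a - 1) (a + |b|) / (1 + (a - 1)² + (2a - 1)² b²)`, a rational function of `a` and `|b|`
bounded by `9` on the whole plane.
-/

open ComplexConjugate

def halfPlaneH (z : ℂ) : ℂ := z * (2 - z) / (2 * (1 - z) ^ 2)

def halfPlaneG (z : ℂ) : ℂ := -z ^ 2 / (2 * (1 - z) ^ 2)

lemma one_sub_ne_zero_of_mem_unitDisk {z : ℂ} (hz : z ∈ 𝔻) : 1 - z ≠ 0 := by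
  rintro h
  rw [← eq_of_sub_eq_zero h] at hz
  simp [unitDisk] at hz

lemma hasDerivAt_two_mul_one_sub_sq (z : ℂ) :
    HasDerivAt (fun w : ℂ => 2 * (1 - w) ^ 2) (-4 * (1 - z)) z :=
  ((((hasDerivAt_id' z).const_sub 1).fun_pow 2).const_mul 2).congr_deriv (by push_cast; ring)

lemma halfPlaneH_hasDerivAt {z : ℂ} (hz : 1 - z ≠ 0) :
    HasDerivAt halfPlaneH ((1 - z)⁻¹ ^ 3) z := by
  have hnum : HasDerivAt (fun w : ℂ => w * (2 - w)) (2 - 2 * z) z :=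
    ((hasDerivAt_id' z).fun_mul ((hasDerivAt_id' z).const_sub 2)).congr_deriv (by ring)
  refine (hnum.div (hasDerivAt_two_mul_one_sub_sq z) (by simp [hz])).congr_deriv ?_
  field_simp
  ring

lemma halfPlaneG_hasDerivAt {z : ℂ} (hz : 1 - z ≠ 0) :
    HasDerivAt halfPlaneG (-z * (1 - z)⁻¹ ^ 3) z := by
  have hnum : HasDerivAt (fun w : ℂ => -w ^ 2) (-2 * z) z :=
    (hasDerivAt_pow 2 z).fun_neg.congr_deriv (by push_cast; ring)
  refine (hnum.div (hasDerivAt_two_mul_one_sub_sq z) (by simp [hz])).congr_deriv ?_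
  field_simp
  ring

lemma norm_deriv_halfPlaneH_add_norm_deriv_halfPlaneG {z : ℂ} (hz : 1 - z ≠ 0) :
    ‖deriv halfPlaneH z‖ + ‖deriv halfPlaneG z‖ = (1 + ‖z‖) * ‖(1 - z)⁻¹‖ ^ 3 := by
  rw [(halfPlaneH_hasDerivAt hz).deriv, (halfPlaneG_hasDerivAt hz).deriv]
  simp only [norm_mul, norm_neg, norm_pow]
  ring

lemma harmMap_halfPlane_eq {z : ℂ} (hz : 1 - z ≠ 0) :
    harmMap halfPlaneH halfPlaneG z =
      ((z / (1 - z)).re : ℂ) + I * ((z / (1 - z) ^ 2).im : ℂ) := by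
  have hz' : 1 - conj z ≠ 0 := by simpa using (map_ne_zero (starRingEnd ℂ)).2 hz
  rw [re_eq_add_conj, im_eq_sub_conj]
  simp only [harmMap, halfPlaneH, halfPlaneG, map_div₀, map_neg, map_pow, map_sub, map_one,
    map_mul, map_ofNat]
  field_simp
  ring

lemma sq_norm_harmMap_halfPlane {z : ℂ} (hz : 1 - z ≠ 0) :
    ‖harmMap halfPlaneH halfPlaneG z‖ ^ 2 =
      ((1 - z)⁻¹.re - 1) ^ 2 + ((2 * (1 - z)⁻¹.re - 1) * (1 - z)⁻¹.im) ^ 2 := by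
  set w := (1 - z)⁻¹
  have hz_eq : z = 1 - w⁻¹ := by simp [w]
  have hw : w ≠ 0 := inv_ne_zero hz
  have h1 : z / (1 - z) = w - 1 := by rw [hz_eq]; field_simp; ring
  have h2 : z / (1 - z) ^ 2 = w * w - w := by rw [hz_eq]; field_simp; ring
  rw [harmMap_halfPlane_eq hz, h1, h2, Complex.sq_norm, normSq_apply]
  simp only [add_re, add_im, mul_re, mul_im, sub_re, sub_im, ofReal_re, ofReal_im, I_re, I_im,
    one_re]
  ring

lemma one_sub_sq_norm_mul_sq_norm_inv_one_sub {z : ℂ} (hz : 1 - z ≠ 0) :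
    (1 - ‖z‖ ^ 2) * ‖(1 - z)⁻¹‖ ^ 2 = 2 * (1 - z)⁻¹.re - 1 := by
  have hn : normSq (1 - z) ≠ 0 := normSq_eq_zero.not.2 hz
  rw [inv_re, norm_inv, inv_pow, Complex.sq_norm, Complex.sq_norm]
  field_simp
  simp only [normSq_apply, sub_re, sub_im, one_re, one_im]
  ring

lemma two_mul_sub_one_mul_add_abs_le (a b : ℝ) :
    (2 * a - 1) * (a + |b|) ≤ 9 / 2 * (1 + (a - 1) ^ 2 + ((2 * a - 1) * b) ^ 2) := by
  nlinarith [sq_nonneg ((2 * a - 1) * |b| - 1), sq_nonneg (2 * a - 7 / 2), sq_abs b,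
    abs_nonneg b]

lemma nQuot_halfPlane_le {z : ℂ} (hz : z ∈ 𝔻) : nQuot halfPlaneH halfPlaneG z ≤ 9 := by
  have hz1 := one_sub_ne_zero_of_mem_unitDisk hz
  have hz_lt : ‖z‖ < 1 := by simpa [unitDisk] using hz
  have hscale := one_sub_sq_norm_mul_sq_norm_inv_one_sub hz1
  set w := (1 - z)⁻¹
  have ha : 1 / 2 < w.re := by
    have : 0 < ‖w‖ := norm_pos_iff.2 (inv_ne_zero hz1)
    have : ‖z‖ ^ 2 < 1 := by nlinarith [norm_nonneg z]
    nlinarith [mul_pos (sub_pos.2 this) (pow_pos ‹0 < ‖w‖› 2)]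
  have hnorm_w : ‖w‖ ≤ w.re + |w.im| := by
    simpa [abs_of_pos (by linarith : 0 < w.re)] using norm_le_abs_re_add_abs_im w
  rw [nQuot, norm_deriv_halfPlaneH_add_norm_deriv_halfPlaneG hz1, sq_norm_harmMap_halfPlane hz1,
    div_le_iff₀ (by positivity)]
  calc (1 - ‖z‖ ^ 2) * ((1 + ‖z‖) * ‖w‖ ^ 3)
      = (2 * w.re - 1) * (1 + ‖z‖) * ‖w‖ := by rw [← hscale]; ring
    _ ≤ (2 * w.re - 1) * 2 * (w.re + |w.im|) := by gcongr <;> linarith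
    _ ≤ 9 * (1 + ((w.re - 1) ^ 2 + ((2 * w.re - 1) * w.im) ^ 2)) := by
        nlinarith [two_mul_sub_one_mul_add_abs_le w.re w.im]

lemma harmNorm_lt_top_of_forall_le {h g : ℂ → ℂ} {C : ℝ} (hC : ∀ z ∈ 𝔻, nQuot h g z ≤ C) :
    harmNorm h g < ⊤ :=
  (iSup₂_le fun z hz => ENNReal.ofReal_le_ofReal (hC z hz)).trans_lt ENNReal.ofReal_lt_top

theorem normal_halfplane_map :
    let h : ℂ → ℂ := fun z => z * (2 - z) / (2 * (1 - z) ^ 2)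
    let g : ℂ → ℂ := fun z => -z ^ 2 / (2 * (1 - z) ^ 2)
    (∀ z ∈ 𝔻, harmMap h g z =
      (((z / (1 - z)).re : ℂ) + Complex.I * ((z / (1 - z) ^ 2).im : ℂ))) ∧
    harmNorm h g < ⊤ :=
  ⟨fun _ hz => harmMap_halfPlane_eq (one_sub_ne_zero_of_mem_unitDisk hz),
    harmNorm_lt_top_of_forall_le fun _ => nQuot_halfPlane_le⟩
end
end

section
/- For k > 0, let f(z) = (2k/π)·Arg((1+z)/(1−z)) on the unit disk 𝔻, a real-valued harmonic mapping with canonical decomposition f = h + conj(g) where h(z) = g(z) = −i(k/π)·log((1+z)/(1−z)) (principal branch). Then |f(z)| ≤ k for all z ∈ 𝔻 and ‖f‖_n = 4k/π; hence the bound ‖f‖_n ≤ 4k/π for harmonic mappings bounded by k is sharp. -/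
open Complex Metric Set ENNReal Filter

noncomputable section

/-! Since `g = h`, the map is `f = 2 Re h = (2k/π) Arg((1+z)/(1-z))`, and `(1+z)/(1-z)` lies in the
right half-plane, so `|f| ≤ k`. Moreover `|h'(z)| = 2k / (π |1-z²|)` and `1 - |z|² ≤ |1-z²|`, so the
quotient defining `‖f‖ₙ` is at most `4k/π`, with equality at `z = 0`, where `f` vanishes. -/

open scoped Real

lemma one_sub_ne_zero_of_norm_lt_one {z : ℂ} (hz : ‖z‖ < 1) : 1 - z ≠ 0 :=
  sub_ne_zero.2 fun h => by simp [← h] at hz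

lemma one_add_ne_zero_of_norm_lt_one {z : ℂ} (hz : ‖z‖ < 1) : 1 + z ≠ 0 := by
  simpa using one_sub_ne_zero_of_norm_lt_one (z := -z) (by simpa using hz)

lemma one_sub_norm_sq_le_norm_one_sub_sq (z : ℂ) : 1 - ‖z‖ ^ 2 ≤ ‖1 - z ^ 2‖ := by
  have := norm_sub_norm_le (1 : ℂ) (z ^ 2)
  rwa [norm_one, norm_pow] at this

lemma re_one_add_div_one_sub_pos {z : ℂ} (hz : ‖z‖ < 1) : 0 < ((1 + z) / (1 - z)).re := by
  have hnum : ((1 + z) * (starRingEnd ℂ) (1 - z)).re = 1 - ‖z‖ ^ 2 := by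
    simp only [map_sub, map_one, mul_re, add_re, one_re, sub_re, conj_re, add_im, one_im, zero_add,
      sub_im, conj_im, sub_neg_eq_add, Complex.sq_norm, normSq_apply]
    ring
  rw [div_eq_mul_inv, Complex.inv_def, ← mul_assoc, Complex.re_mul_ofReal, hnum]
  have := Complex.normSq_pos.2 (one_sub_ne_zero_of_norm_lt_one hz)
  have : ‖z‖ ^ 2 < 1 := by nlinarith [norm_nonneg z]
  positivity

lemma hasDerivAt_log_one_add_div_one_sub {z : ℂ} (hz : ‖z‖ < 1) :
    HasDerivAt (fun w => Complex.log ((1 + w) / (1 - w))) (2 / (1 - z ^ 2)) z := by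
  have h₁ := one_sub_ne_zero_of_norm_lt_one hz
  have h₂ := one_add_ne_zero_of_norm_lt_one hz
  have h₃ : 1 - z ^ 2 ≠ 0 := by
    rw [show 1 - z ^ 2 = (1 + z) * (1 - z) by ring]
    exact mul_ne_zero h₂ h₁
  have hq : HasDerivAt (fun w : ℂ => (1 + w) / (1 - w)) (2 / (1 - z) ^ 2) z := by
    refine (((hasDerivAt_id z).const_add 1).div ((hasDerivAt_id z).const_sub 1) h₁).congr_deriv ?_
    simp only [id]
    ring
  refine ((Complex.hasDerivAt_log (Or.inl (re_one_add_div_one_sub_pos hz))).comp z hq).congr_deriv ?_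
  field_simp
  ring

lemma harmMap_self (h : ℂ → ℂ) (z : ℂ) : harmMap h h z = ((2 * (h z).re : ℝ) : ℂ) := by
  simp [harmMap, Complex.add_conj]

lemma harmNorm_eq_of_isGreatest {h g : ℂ → ℂ} {M : ℝ} (hM : IsGreatest (nQuot h g '' 𝔻) M) :
    harmNorm h g = ENNReal.ofReal M := by
  obtain ⟨⟨z₀, hz₀, rfl⟩, hle⟩ := hM
  refine le_antisymm (iSup₂_le fun z hz => ENNReal.ofReal_le_ofReal (hle ⟨z, hz, rfl⟩)) ?_
  exact le_iSup₂ (f := fun z (_ : z ∈ 𝔻) => ENNReal.ofReal (nQuot h g z)) z₀ hz₀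

/-- Maps `𝔻` conformally onto the strip `|Re w| < cπ/2`. -/
def stripMap (c : ℝ) (z : ℂ) : ℂ := -I * c * Complex.log ((1 + z) / (1 - z))

lemma harmMap_stripMap (c : ℝ) (z : ℂ) :
    harmMap (stripMap c) (stripMap c) z = ((2 * c * arg ((1 + z) / (1 - z)) : ℝ) : ℂ) := by
  rw [harmMap_self]
  simp only [stripMap, neg_mul, neg_re, mul_re, I_re, ofReal_re, zero_mul, I_im, ofReal_im, mul_zero,
    sub_self, mul_im, one_mul, zero_add, log_im, zero_sub, neg_neg, Complex.ofReal_mul,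
    Complex.ofReal_ofNat]
  ring

lemma norm_harmMap_stripMap_le {c : ℝ} (hc : 0 ≤ c) {z : ℂ} (hz : ‖z‖ < 1) :
    ‖harmMap (stripMap c) (stripMap c) z‖ ≤ c * π := by
  have harg := Complex.abs_arg_le_pi_div_two_iff.2 (re_one_add_div_one_sub_pos hz).le
  rw [harmMap_stripMap, Complex.norm_real, Real.norm_eq_abs, abs_mul, abs_of_nonneg (by positivity)]
  calc 2 * c * |arg ((1 + z) / (1 - z))| ≤ 2 * c * (π / 2) := by gcongr
    _ = c * π := by ring

lemma hasDerivAt_stripMap (c : ℝ) {z : ℂ} (hz : ‖z‖ < 1) :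
    HasDerivAt (stripMap c) (-I * c * (2 / (1 - z ^ 2))) z :=
  (hasDerivAt_log_one_add_div_one_sub hz).const_mul (-I * c)

lemma norm_deriv_stripMap {c : ℝ} (hc : 0 ≤ c) {z : ℂ} (hz : ‖z‖ < 1) :
    ‖deriv (stripMap c) z‖ = 2 * c / ‖1 - z ^ 2‖ := by
  rw [(hasDerivAt_stripMap c hz).deriv]
  simp only [neg_mul, norm_neg, Complex.norm_mul, norm_I, norm_real, Real.norm_eq_abs,
    abs_of_nonneg hc, one_mul, Complex.norm_div, norm_ofNat]
  ring

lemma nQuot_stripMap_le {c : ℝ} (hc : 0 ≤ c) {z : ℂ} (hz : ‖z‖ < 1) :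
    nQuot (stripMap c) (stripMap c) z ≤ 4 * c := by
  have hz2 : 0 < 1 - ‖z‖ ^ 2 := by nlinarith [norm_nonneg z]
  have hle := one_sub_norm_sq_le_norm_one_sub_sq z
  have hnum : (1 - ‖z‖ ^ 2) * (2 * c / ‖1 - z ^ 2‖ + 2 * c / ‖1 - z ^ 2‖) ≤ 4 * c := by
    rw [show (1 - ‖z‖ ^ 2) * (2 * c / ‖1 - z ^ 2‖ + 2 * c / ‖1 - z ^ 2‖)
        = 4 * c * ((1 - ‖z‖ ^ 2) / ‖1 - z ^ 2‖) by ring]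
    exact mul_le_of_le_one_right (by positivity) ((div_le_one (hz2.trans_le hle)).2 hle)
  rw [nQuot, norm_deriv_stripMap hc hz]
  exact (div_le_self (by positivity) (le_add_of_nonneg_right (sq_nonneg _))).trans hnum

lemma nQuot_stripMap_zero {c : ℝ} (hc : 0 ≤ c) :
    nQuot (stripMap c) (stripMap c) 0 = 4 * c := by
  rw [nQuot, norm_deriv_stripMap hc (by simp), harmMap_stripMap]
  simp only [norm_zero, ne_eq, OfNat.ofNat_ne_zero, not_false_eq_true, zero_pow, sub_zero, norm_one,
    div_one, one_mul, add_zero, one_ne_zero, div_self, arg_one, mul_zero, Complex.ofReal_zero]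
  ring

theorem harmNorm_bound_sharp (k : ℝ) (hk : 0 < k) :
    let h : ℂ → ℂ := fun z => -Complex.I * (k / Real.pi) * Complex.log ((1 + z) / (1 - z))
    (∀ z ∈ 𝔻, harmMap h h z = (((2 * k / Real.pi) * ((1 + z) / (1 - z)).arg : ℝ) : ℂ)) ∧
    (∀ z ∈ 𝔻, ‖harmMap h h z‖ ≤ k) ∧
    harmNorm h h = ENNReal.ofReal (4 * k / Real.pi) := by
  intro h
  have hh : h = stripMap (k / π) := by
    funext z; simp [h, stripMap]
  have hc : 0 ≤ k / π := by positivity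
  rw [hh]
  refine ⟨fun z _ => by rw [harmMap_stripMap]; ring_nf, fun z hz => ?_, ?_⟩
  · simpa [div_mul_cancel₀ k Real.pi_ne_zero] using
      norm_harmMap_stripMap_le hc (mem_ball_zero_iff.1 hz)
  · rw [harmNorm_eq_of_isGreatest (M := 4 * (k / π)), mul_div_assoc]
    refine ⟨⟨0, by simp [unitDisk], nQuot_stripMap_zero hc⟩, ?_⟩
    rintro _ ⟨z, hz, rfl⟩
    exact nQuot_stripMap_le hc (mem_ball_zero_iff.1 hz)
end
end

section
/- Let f = h + conj(g) be a harmonic mapping on the unit disk 𝔻 with |f(z)| ≤ k for all z ∈ 𝔻, for some constant k > 0. Then the analytic function h is normal, i.e. sup_{z ∈ 𝔻} (1−|z|²)·|h′(z)|/(1+|h(z)|²) < ∞; and likewise the analytic function g is normal. -/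
open Complex Metric Set ENNReal Filter

noncomputable section

/-!
Both `h + g` and `h - g` have bounded real, resp. imaginary, part, since
`Re (h + g) = Re f` and `Im (h - g) = Im f`. A holomorphic `p` with `|Re p| ≤ k` on a disk
of radius `r` has `exp ∘ p` bounded by `eᵏ` and `|exp p| ≥ e⁻ᵏ`, so the Cauchy estimate for
`exp ∘ p` gives `|p'| ≤ 2 e^{2k} / r` at the centre. Hence `h' = ((h + g)' + (h - g)') / 2`
is `O(1 / (1 - |z|))`, i.e. `h` is a Bloch function, and a fortiori normal because
`1 + |h|² ≥ 1`. The statement for `g` follows by symmetry, as `g + conj h = conj f`.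
-/

theorem norm_deriv_le_of_abs_re_le {p : ℂ → ℂ} {c : ℂ} {r k : ℝ}
    (hp : DifferentiableOn ℂ p (ball c r)) (hr : 0 < r)
    (hre : ∀ w ∈ ball c r, |(p w).re| ≤ k) :
    ‖deriv p c‖ ≤ 2 * Real.exp (2 * k) / r := by
  have hc : c ∈ ball c r := mem_ball_self hr
  have hexp_le : ∀ w ∈ ball c r, ‖exp (p w)‖ ≤ Real.exp k := fun w hw => by
    rw [norm_exp]
    exact Real.exp_le_exp.2 (le_of_abs_le (hre w hw))
  have hmaps : MapsTo (fun w => exp (p w)) (ball c r)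
      (closedBall (exp (p c)) (2 * Real.exp k)) := fun w hw => by
    rw [mem_closedBall, dist_eq]
    linarith [norm_sub_le (exp (p w)) (exp (p c)), hexp_le w hw, hexp_le c hc]
  have hcauchy : ‖exp (p c)‖ * ‖deriv p c‖ ≤ 2 * Real.exp k / r := by
    have hpc : HasDerivAt p (deriv p c) c :=
      (hp.differentiableAt (isOpen_ball.mem_nhds hc)).hasDerivAt
    rw [← norm_mul, ← hpc.cexp.deriv]
    exact norm_deriv_le_div_of_mapsTo_ball hp.cexp hmaps hr
  have hexp_ge : Real.exp (-k) ≤ ‖exp (p c)‖ := by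
    rw [norm_exp]
    exact Real.exp_le_exp.2 (neg_le_of_abs_le (hre c hc))
  calc ‖deriv p c‖ = Real.exp k * (Real.exp (-k) * ‖deriv p c‖) := by
        rw [← mul_assoc, ← Real.exp_add, add_neg_cancel, Real.exp_zero, one_mul]
    _ ≤ Real.exp k * (‖exp (p c)‖ * ‖deriv p c‖) := by gcongr
    _ ≤ Real.exp k * (2 * Real.exp k / r) := by gcongr
    _ = 2 * Real.exp (2 * k) / r := by rw [two_mul k, Real.exp_add]; ring

theorem norm_deriv_le_of_abs_im_le {p : ℂ → ℂ} {c : ℂ} {r k : ℝ}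
    (hp : DifferentiableOn ℂ p (ball c r)) (hr : 0 < r)
    (him : ∀ w ∈ ball c r, |(p w).im| ≤ k) :
    ‖deriv p c‖ ≤ 2 * Real.exp (2 * k) / r := by
  have hIp : DifferentiableOn ℂ (fun w => I * p w) (ball c r) :=
    (differentiableOn_const I).mul hp
  have hre : ∀ w ∈ ball c r, |(I * p w).re| ≤ k := fun w hw => by
    simpa using him w hw
  have hpc : DifferentiableAt ℂ p c := hp.differentiableAt (isOpen_ball.mem_nhds (mem_ball_self hr))
  simpa [deriv_const_mul I hpc] using norm_deriv_le_of_abs_re_le hIp hr hre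

theorem norm_deriv_le_of_norm_harmMap_le {h g : ℂ → ℂ} {c : ℂ} {r k : ℝ}
    (hh : DifferentiableOn ℂ h (ball c r)) (hg : DifferentiableOn ℂ g (ball c r)) (hr : 0 < r)
    (hbound : ∀ w ∈ ball c r, ‖harmMap h g w‖ ≤ k) :
    ‖deriv h c‖ ≤ 2 * Real.exp (2 * k) / r := by
  have hre : ∀ w ∈ ball c r, |((h + g) w).re| ≤ k := fun w hw => by
    simpa [harmMap] using (abs_re_le_norm _).trans (hbound w hw)
  have him : ∀ w ∈ ball c r, |((h - g) w).im| ≤ k := fun w hw => by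
    simpa [harmMap, sub_eq_add_neg] using (abs_im_le_norm _).trans (hbound w hw)
  have hplus := norm_deriv_le_of_abs_re_le (hh.add hg) hr hre
  have hminus := norm_deriv_le_of_abs_im_le (hh.sub hg) hr him
  have hc : ball c r ∈ nhds c := isOpen_ball.mem_nhds (mem_ball_self hr)
  have hhc := hh.differentiableAt hc
  have hgc := hg.differentiableAt hc
  have hsplit : deriv h c = (deriv (h + g) c + deriv (h - g) c) / 2 := by
    rw [(hhc.hasDerivAt.add hgc.hasDerivAt).deriv, (hhc.hasDerivAt.sub hgc.hasDerivAt).deriv]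
    ring
  rw [hsplit, norm_div, RCLike.norm_ofNat]
  linarith [norm_add_le (deriv (h + g) c) (deriv (h - g) c)]

theorem norm_harmMap_swap (h g : ℂ → ℂ) (z : ℂ) : ‖harmMap g h z‖ = ‖harmMap h g z‖ := by
  rw [← Complex.norm_conj (harmMap h g z)]
  simp [harmMap, add_comm]

theorem ball_one_sub_norm_subset_unitDisk (z : ℂ) : ball z (1 - ‖z‖) ⊆ 𝔻 :=
  ball_subset_ball' (by simp)

theorem bloch_bound_of_norm_harmMap_le {h g : ℂ → ℂ} {k : ℝ}
    (hh : DifferentiableOn ℂ h 𝔻) (hg : DifferentiableOn ℂ g 𝔻)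
    (hbound : ∀ z ∈ 𝔻, ‖harmMap h g z‖ ≤ k) :
    ∀ z ∈ 𝔻, (1 - ‖z‖ ^ 2) * ‖deriv h z‖ ≤ 4 * Real.exp (2 * k) := by
  intro z hz
  have hz1 : ‖z‖ < 1 := by simpa [unitDisk] using hz
  have hr : 0 < 1 - ‖z‖ := sub_pos.2 hz1
  have hsub := ball_one_sub_norm_subset_unitDisk z
  have hderiv := norm_deriv_le_of_norm_harmMap_le (hh.mono hsub) (hg.mono hsub) hr
    (fun w hw => hbound w (hsub hw))
  calc (1 - ‖z‖ ^ 2) * ‖deriv h z‖ = (1 + ‖z‖) * ((1 - ‖z‖) * ‖deriv h z‖) := by ring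
    _ ≤ 2 * (2 * Real.exp (2 * k)) := by
        gcongr ?_ * ?_
        · linarith
        · rwa [le_div_iff₀' hr] at hderiv
    _ = 4 * Real.exp (2 * k) := by ring

theorem normal_bound_of_bloch_bound {u : ℂ → ℂ} {M : ℝ}
    (hu : ∀ z ∈ 𝔻, (1 - ‖z‖ ^ 2) * ‖deriv u z‖ ≤ M) :
    ∀ z ∈ 𝔻, (1 - ‖z‖ ^ 2) * ‖deriv u z‖ / (1 + ‖u z‖ ^ 2) ≤ M := by
  intro z hz
  have hz1 : ‖z‖ < 1 := by simpa [unitDisk] using hz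
  have hnum : 0 ≤ (1 - ‖z‖ ^ 2) * ‖deriv u z‖ := by
    have : ‖z‖ ^ 2 < 1 := by nlinarith [norm_nonneg z]
    positivity
  exact (div_le_self hnum (le_add_of_nonneg_right (sq_nonneg _))).trans (hu z hz)

theorem analytic_parts_normal_of_bounded_general (h g : ℂ → ℂ)
    (hh : DifferentiableOn ℂ h 𝔻) (hg : DifferentiableOn ℂ g 𝔻)
    (k : ℝ) (hbound : ∀ z ∈ 𝔻, ‖harmMap h g z‖ ≤ k) :
    (∃ M : ℝ, ∀ z ∈ 𝔻,
      (1 - ‖z‖ ^ 2) * ‖deriv h z‖ / (1 + ‖h z‖ ^ 2) ≤ M) ∧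
    (∃ M : ℝ, ∀ z ∈ 𝔻,
      (1 - ‖z‖ ^ 2) * ‖deriv g z‖ / (1 + ‖g z‖ ^ 2) ≤ M) := by
  have hbound' : ∀ z ∈ 𝔻, ‖harmMap g h z‖ ≤ k := fun z hz => by
    simpa [norm_harmMap_swap] using hbound z hz
  exact ⟨⟨_, normal_bound_of_bloch_bound (bloch_bound_of_norm_harmMap_le hh hg hbound)⟩,
    ⟨_, normal_bound_of_bloch_bound (bloch_bound_of_norm_harmMap_le hg hh hbound')⟩⟩

theorem analytic_parts_normal_of_bounded (h g : ℂ → ℂ)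
    (hh : DifferentiableOn ℂ h 𝔻) (hg : DifferentiableOn ℂ g 𝔻)
    (k : ℝ) (hk : 0 < k) (hbound : ∀ z ∈ 𝔻, ‖harmMap h g z‖ ≤ k) :
    (∃ M : ℝ, ∀ z ∈ 𝔻,
      (1 - ‖z‖ ^ 2) * ‖deriv h z‖ / (1 + ‖h z‖ ^ 2) ≤ M) ∧
    (∃ M : ℝ, ∀ z ∈ 𝔻,
      (1 - ‖z‖ ^ 2) * ‖deriv g z‖ / (1 + ‖g z‖ ^ 2) ≤ M) :=
  analytic_parts_normal_of_bounded_general h g hh hg k hbound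
end
end

section
/- Let h be an analytic univalent function on the unit disk 𝔻 with h(0) = 0 whose image h(𝔻) is starlike with respect to 0, and let g be analytic on 𝔻 with g(0) = 0 such that |g′(z)| ≤ c·|h′(z)| for all z ∈ 𝔻, where 0 ≤ c < 1. Then |g(z)| ≤ c·|h(z)| for all z ∈ 𝔻. -/
open Complex Metric Set ENNReal Filter

noncomputable section

/-!
Since `h` is injective and holomorphic it is an open map, so `F = g ∘ h⁻¹` (with `h⁻¹ = invFunOn h 𝔻`) is defined on the open
set `h(𝔻)`. At points where `h' ≠ 0` the inverse function theorem gives `F' = g' / h'`, hence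
`|F'| ≤ c`. Critical points of `h` are isolated, so `F` is holomorphic on a punctured neighbourhood
of their images and continuous there; by Riemann's removable singularity theorem `F` is
holomorphic on all of `h(𝔻)`, and `|F'| ≤ c` extends by continuity. Starlikeness puts the segment
`[0, h(z)]` inside `h(𝔻)`, and the mean value inequality along it gives
`|g(z)| = |F(h(z)) - F(0)| ≤ c |h(z)|`.
-/

open Topology Function

namespace Set.InjOn

variable {U : Set ℂ} {f g : ℂ → ℂ} {z₀ : ℂ}

theorem not_eventually_eq (hinj : InjOn f U) (hU : IsOpen U) (hz₀ : z₀ ∈ U) :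
    ¬∀ᶠ z in 𝓝 z₀, f z = f z₀ := by
  intro hconst
  have hpunctured : ∀ᶠ z in 𝓝[≠] z₀, (f z = f z₀ ∧ z ∈ U) ∧ z ≠ z₀ :=
    ((hconst.and (hU.eventually_mem hz₀)).filter_mono nhdsWithin_le_nhds).and
      self_mem_nhdsWithin
  obtain ⟨z, ⟨hfz, hz⟩, hne⟩ := hpunctured.exists
  exact hne (hinj hz hz₀ hfz)

theorem nhds_le_map_nhds (hinj : InjOn f U) (hU : IsOpen U) (hf : DifferentiableOn ℂ f U)
    (hz₀ : z₀ ∈ U) : 𝓝 (f z₀) ≤ map f (𝓝 z₀) :=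
  ((hf.analyticOnNhd hU z₀ hz₀).eventually_constant_or_nhds_le_map_nhds).resolve_left
    (hinj.not_eventually_eq hU hz₀)

theorem image_mem_nhds (hinj : InjOn f U) (hU : IsOpen U) (hf : DifferentiableOn ℂ f U)
    (hz₀ : z₀ ∈ U) : f '' U ∈ 𝓝 (f z₀) :=
  hinj.nhds_le_map_nhds hU hf hz₀ (image_mem_map (hU.mem_nhds hz₀))

theorem isOpen_image (hinj : InjOn f U) (hU : IsOpen U) (hf : DifferentiableOn ℂ f U) :
    IsOpen (f '' U) :=
  isOpen_iff_mem_nhds.2 <| forall_mem_image.2 fun _ hz => hinj.image_mem_nhds hU hf hz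

theorem tendsto_invFunOn (hinj : InjOn f U) (hU : IsOpen U) (hf : DifferentiableOn ℂ f U)
    (hz₀ : z₀ ∈ U) : Tendsto (invFunOn f U) (𝓝 (f z₀)) (𝓝 z₀) := by
  refine tendsto_def.2 fun V hV => ?_
  have himage : f '' (V ∩ U) ∈ 𝓝 (f z₀) :=
    hinj.nhds_le_map_nhds hU hf hz₀ (image_mem_map (inter_mem hV (hU.mem_nhds hz₀)))
  refine mem_of_superset himage ?_
  rintro _ ⟨z, ⟨hzV, hzU⟩, rfl⟩
  rwa [mem_preimage, hinj.leftInvOn_invFunOn hzU]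

theorem eventually_deriv_ne_zero (hinj : InjOn f U) (hU : IsOpen U)
    (hf : DifferentiableOn ℂ f U) (hz₀ : z₀ ∈ U) : ∀ᶠ z in 𝓝[≠] z₀, deriv f z ≠ 0 := by
  refine ((hf.analyticOnNhd hU).deriv z₀ hz₀).eventually_eq_zero_or_eventually_ne_zero
    |>.resolve_left fun hzero => ?_
  obtain ⟨r, hr, hball⟩ := eventually_nhds_iff_ball.mp (hzero.and (hU.eventually_mem hz₀))
  refine hinj.not_eventually_eq hU hz₀ (eventually_nhds_iff_ball.mpr ⟨r, hr, fun z hz => ?_⟩)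
  exact isOpen_ball.is_const_of_deriv_eq_zero (convex_ball z₀ r).isPreconnected
    (hf.mono fun y hy => (hball y hy).2) (fun y hy => (hball y hy).1) hz (mem_ball_self hr)

theorem eventually_regular_value (hinj : InjOn f U) (hU : IsOpen U)
    (hf : DifferentiableOn ℂ f U) (hz₀ : z₀ ∈ U) :
    ∀ᶠ w in 𝓝[≠] f z₀, ∃ z ∈ U, f z = w ∧ deriv f z ≠ 0 := by
  have himage : ∀ᶠ w in 𝓝[≠] f z₀, w ∈ f '' U :=
    eventually_nhdsWithin_of_eventually_nhds (hinj.image_mem_nhds hU hf hz₀)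
  have htendsto : Tendsto (invFunOn f U) (𝓝[≠] f z₀) (𝓝[≠] z₀) := by
    refine tendsto_nhdsWithin_iff.2
      ⟨(hinj.tendsto_invFunOn hU hf hz₀).mono_left nhdsWithin_le_nhds, ?_⟩
    filter_upwards [himage, self_mem_nhdsWithin] with w hw hne heq
    exact hne (heq ▸ (invFunOn_eq hw).symm)
  filter_upwards [himage, htendsto.eventually (hinj.eventually_deriv_ne_zero hU hf hz₀)]
    with w hw hderiv
  exact ⟨_, invFunOn_mem hw, invFunOn_eq hw, hderiv⟩

theorem hasDerivAt_comp_invFunOn (hinj : InjOn f U) (hU : IsOpen U)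
    (hf : DifferentiableOn ℂ f U) (hg : DifferentiableOn ℂ g U) (hz₀ : z₀ ∈ U)
    (hf' : deriv f z₀ ≠ 0) :
    HasDerivAt (g ∘ invFunOn f U) (deriv g z₀ / deriv f z₀) (f z₀) := by
  have hinv : HasStrictDerivAt (invFunOn f U) (deriv f z₀)⁻¹ (f z₀) :=
    (hf.analyticOnNhd hU z₀ hz₀).hasStrictDerivAt.to_local_left_inverse hf'
      ((hU.eventually_mem hz₀).mono fun _ hz => hinj.leftInvOn_invFunOn hz)
  have hg' : HasDerivAt g (deriv g z₀) (invFunOn f U (f z₀)) := by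
    rw [hinj.leftInvOn_invFunOn hz₀]
    exact (hg.differentiableAt (hU.mem_nhds hz₀)).hasDerivAt
  simpa only [div_eq_mul_inv] using hg'.comp (f z₀) hinv.hasDerivAt

theorem differentiableOn_comp_invFunOn (hinj : InjOn f U) (hU : IsOpen U)
    (hf : DifferentiableOn ℂ f U) (hg : DifferentiableOn ℂ g U) :
    DifferentiableOn ℂ (g ∘ invFunOn f U) (f '' U) := by
  rintro _ ⟨z₀, hz₀, rfl⟩
  refine DifferentiableAt.differentiableWithinAt ?_
  by_cases hf' : deriv f z₀ = 0
  · have hcont : ContinuousAt (g ∘ invFunOn f U) (f z₀) := by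
      rw [ContinuousAt, comp_apply, hinj.leftInvOn_invFunOn hz₀]
      exact (hg.continuousOn.continuousAt (hU.mem_nhds hz₀)).tendsto.comp
        (hinj.tendsto_invFunOn hU hf hz₀)
    have hpunctured : ∀ᶠ w in 𝓝[≠] f z₀, DifferentiableAt ℂ (g ∘ invFunOn f U) w := by
      filter_upwards [hinj.eventually_regular_value hU hf hz₀] with _ ⟨z, hz, hzw, hfz⟩
      subst hzw
      exact (hinj.hasDerivAt_comp_invFunOn hU hf hg hz hfz).differentiableAt
    exact (analyticAt_of_differentiable_on_punctured_nhds_of_continuousAt hpunctured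
      hcont).differentiableAt
  · exact (hinj.hasDerivAt_comp_invFunOn hU hf hg hz₀ hf').differentiableAt

theorem norm_deriv_comp_invFunOn_le (hinj : InjOn f U) (hU : IsOpen U)
    (hf : DifferentiableOn ℂ f U) (hg : DifferentiableOn ℂ g U) {c : ℝ}
    (hd : ∀ z ∈ U, ‖deriv g z‖ ≤ c * ‖deriv f z‖) {w : ℂ} (hw : w ∈ f '' U) :
    ‖deriv (g ∘ invFunOn f U) w‖ ≤ c := by
  have hregular : ∀ z ∈ U, deriv f z ≠ 0 → ‖deriv (g ∘ invFunOn f U) (f z)‖ ≤ c := by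
    intro z hz hfz
    rw [(hinj.hasDerivAt_comp_invFunOn hU hf hg hz hfz).deriv, norm_div,
      div_le_iff₀ (norm_pos_iff.2 hfz)]
    exact hd z hz
  obtain ⟨z₀, hz₀, rfl⟩ := hw
  by_cases hf' : deriv f z₀ = 0
  · have hcont : ContinuousAt (deriv (g ∘ invFunOn f U)) (f z₀) :=
      ((hinj.differentiableOn_comp_invFunOn hU hf hg).analyticOnNhd
        (hinj.isOpen_image hU hf)).deriv _ (mem_image_of_mem f hz₀) |>.continuousAt
    refine le_of_tendsto (x := 𝓝[≠] f z₀) (hcont.tendsto.mono_left nhdsWithin_le_nhds).norm ?_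
    filter_upwards [hinj.eventually_regular_value hU hf hz₀] with _ ⟨z, hz, hzw, hfz⟩
    subst hzw
    exact hregular z hz hfz
  · exact hregular z₀ hz₀ hf'

theorem norm_sub_le_of_norm_deriv_le (hinj : InjOn f U) (hU : IsOpen U)
    (hf : DifferentiableOn ℂ f U) (hg : DifferentiableOn ℂ g U) {c : ℝ}
    (hd : ∀ z ∈ U, ‖deriv g z‖ ≤ c * ‖deriv f z‖) {a b : ℂ} (ha : a ∈ U) (hb : b ∈ U)
    (hseg : segment ℝ (f a) (f b) ⊆ f '' U) : ‖g b - g a‖ ≤ c * ‖f b - f a‖ := by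
  have key := (convex_segment (f a) (f b)).norm_image_sub_le_of_norm_deriv_le
    (fun w hw => (hinj.differentiableOn_comp_invFunOn hU hf hg).differentiableAt
      ((hinj.isOpen_image hU hf).mem_nhds (hseg hw)))
    (fun w hw => hinj.norm_deriv_comp_invFunOn_le hU hf hg hd (hseg hw))
    (left_mem_segment ℝ _ _) (right_mem_segment ℝ _ _)
  simpa only [comp_apply, hinj.leftInvOn_invFunOn ha, hinj.leftInvOn_invFunOn hb] using key

end Set.InjOn

theorem abs_le_of_starlike_general (h g : ℂ → ℂ)
    (hh : DifferentiableOn ℂ h 𝔻) (hg : DifferentiableOn ℂ g 𝔻)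
    (hinj : Set.InjOn h 𝔻) (h0 : h 0 = 0)
    (hstar : ∀ w ∈ h '' 𝔻, ∀ t : ℝ, t ∈ Set.Icc (0 : ℝ) 1 → (t : ℂ) * w ∈ h '' 𝔻)
    (g0 : g 0 = 0) (c : ℝ)
    (hd : ∀ z ∈ 𝔻, ‖deriv g z‖ ≤ c * ‖deriv h z‖) :
    ∀ z ∈ 𝔻, ‖g z‖ ≤ c * ‖h z‖ := by
  intro z hz
  have hopen : IsOpen 𝔻 := isOpen_ball
  have h0mem : (0 : ℂ) ∈ 𝔻 := mem_ball_self one_pos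
  have hseg : segment ℝ (h 0) (h z) ⊆ h '' 𝔻 := by
    rw [h0, segment_eq_image']
    rintro _ ⟨t, ht, rfl⟩
    simpa only [sub_zero, zero_add, real_smul] using hstar (h z) (mem_image_of_mem h hz) t ht
  simpa only [h0, g0, sub_zero] using
    hinj.norm_sub_le_of_norm_deriv_le hopen hh hg hd h0mem hz hseg

theorem abs_le_of_starlike (h g : ℂ → ℂ)
    (hh : DifferentiableOn ℂ h 𝔻) (hg : DifferentiableOn ℂ g 𝔻)
    (hinj : Set.InjOn h 𝔻) (h0 : h 0 = 0)
    (hstar : ∀ w ∈ h '' 𝔻, ∀ t : ℝ, t ∈ Set.Icc (0 : ℝ) 1 → (t : ℂ) * w ∈ h '' 𝔻)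
    (g0 : g 0 = 0) (c : ℝ) (hc0 : 0 ≤ c) (hc1 : c < 1)
    (hd : ∀ z ∈ 𝔻, ‖deriv g z‖ ≤ c * ‖deriv h z‖) :
    ∀ z ∈ 𝔻, ‖g z‖ ≤ c * ‖h z‖ :=
  abs_le_of_starlike_general h g hh hg hinj h0 hstar g0 c hd
end
end
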